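/- Let G = (V,A) be a finite directed graph with A nonempty, c : A → ℝ a strictly positive weight function, c̃ = 1/c, and b : 2^V → ℝ submodular; assume at least one submodular flow exists and that ∂_c̃(X) = 0 holds for every X ⊆ V. Then s(κ) is a constant function of κ, and the optimal weighted spread satisfies σ* = max( 0 , max{ −b(X)/δ_c̃(X) : X ⊆ V, δ_c̃(X) > 0 } ). -/
import Mathlib


open Finset

def inEdges {V A : Type*} [Fintype A] [DecidableEq V] (t hd : A → V) (X : Finset V) : Finset A :=
  univ.filter fun e => t e ∉ X ∧ hd e ∈ X

def outEdges {V A : Type*} [Fintype A] [DecidableEq V] (t hd : A → V) (X : Finset V) : Finset A :=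
  univ.filter fun e => t e ∈ X ∧ hd e ∉ X

def rhoF {V A : Type*} [Fintype A] [DecidableEq V] (t hd : A → V) (x : A → ℝ) (X : Finset V) : ℝ :=
  ∑ e ∈ inEdges t hd X, x e

def deltaF {V A : Type*} [Fintype A] [DecidableEq V] (t hd : A → V) (x : A → ℝ) (X : Finset V) : ℝ :=
  ∑ e ∈ outEdges t hd X, x e

def rhoC {V A : Type*} [Fintype A] [DecidableEq V] (t hd : A → V) (X : Finset V) : ℕ :=
  (inEdges t hd X).card

def deltaC {V A : Type*} [Fintype A] [DecidableEq V] (t hd : A → V) (X : Finset V) : ℕ :=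
  (outEdges t hd X).card

def partC {V A : Type*} [Fintype A] [DecidableEq V] (t hd : A → V) (X : Finset V) : ℝ :=
  (rhoC t hd X : ℝ) - (deltaC t hd X : ℝ)

def Submodular {V : Type*} [DecidableEq V] (b : Finset V → ℝ) : Prop :=
  ∀ X Y : Finset V, b (X ∪ Y) + b (X ∩ Y) ≤ b X + b Y

def IsSubmodularFlow {V A : Type*} [Fintype A] [DecidableEq V] (t hd : A → V)
    (b : Finset V → ℝ) (x : A → ℝ) : Prop :=
  ∀ X : Finset V, rhoF t hd x X - deltaF t hd x X ≤ b X

noncomputable def spread {A : Type*} [Fintype A] [Nonempty A] (x : A → ℝ) : ℝ :=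
  univ.sup' univ_nonempty x - univ.inf' univ_nonempty x

noncomputable def sigmaStar {V A : Type*} [Fintype A] [DecidableEq V] [Nonempty A]
    (t hd : A → V) (b : Finset V → ℝ) : ℝ :=
  sInf {s : ℝ | ∃ x : A → ℝ, IsSubmodularFlow t hd b x ∧ spread x = s}

noncomputable def rhoW {V A : Type*} [Fintype A] [DecidableEq V] (t hd : A → V)
    (c : A → ℝ) (X : Finset V) : ℝ :=
  ∑ e ∈ inEdges t hd X, (c e)⁻¹

noncomputable def deltaW {V A : Type*} [Fintype A] [DecidableEq V] (t hd : A → V)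
    (c : A → ℝ) (X : Finset V) : ℝ :=
  ∑ e ∈ outEdges t hd X, (c e)⁻¹

noncomputable def partW {V A : Type*} [Fintype A] [DecidableEq V] (t hd : A → V)
    (c : A → ℝ) (X : Finset V) : ℝ :=
  rhoW t hd c X - deltaW t hd c X

noncomputable def spreadW {A : Type*} [Fintype A] [Nonempty A] (c x : A → ℝ) : ℝ :=
  univ.sup' univ_nonempty (fun e => c e * x e) - univ.inf' univ_nonempty (fun e => c e * x e)

noncomputable def sigmaStarW {V A : Type*} [Fintype A] [DecidableEq V] [Nonempty A]
    (t hd : A → V) (c : A → ℝ) (b : Finset V → ℝ) : ℝ :=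
  sInf {s : ℝ | ∃ x : A → ℝ, IsSubmodularFlow t hd b x ∧ spreadW c x = s}

noncomputable def sW {V A : Type*} [Fintype A] [DecidableEq V] (t hd : A → V)
    (c : A → ℝ) (b : Finset V → ℝ) (κ : ℝ) : ℝ :=
  sInf {σ : ℝ | 0 ≤ σ ∧ ∃ x : A → ℝ, IsSubmodularFlow t hd b x ∧
    ∀ e : A, κ * (c e)⁻¹ ≤ x e ∧ x e ≤ (κ + σ) * (c e)⁻¹}

section helpers
variable {V A : Type*} [Fintype A] [DecidableEq V]

lemma rhoF_eq_sum (t hd : A → V) (x : A → ℝ) (X : Finset V) :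
    rhoF t hd x X = ∑ e, if t e ∉ X ∧ hd e ∈ X then x e else 0 := by
  rw [rhoF, inEdges, Finset.sum_filter]

lemma deltaF_eq_sum (t hd : A → V) (x : A → ℝ) (X : Finset V) :
    deltaF t hd x X = ∑ e, if t e ∈ X ∧ hd e ∉ X then x e else 0 := by
  rw [deltaF, outEdges, Finset.sum_filter]

lemma rhoF_update [DecidableEq A] (t hd : A → V) (x : A → ℝ) (e : A) (α : ℝ) (X : Finset V) :
    rhoF t hd (Function.update x e α) X =
      rhoF t hd x X + (if t e ∉ X ∧ hd e ∈ X then α - x e else 0) := by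
  rw [rhoF_eq_sum, rhoF_eq_sum]
  have h : ∀ f ∈ (univ : Finset A),
      (if t f ∉ X ∧ hd f ∈ X then Function.update x e α f else 0) =
      (if t f ∉ X ∧ hd f ∈ X then x f else 0) +
        (if f = e then (if t e ∉ X ∧ hd e ∈ X then α - x e else 0) else 0) := by
    intro f _
    by_cases hf : f = e
    · subst hf; simp [Function.update_self]
      split <;> ring
    · simp [Function.update_of_ne hf, hf]
  rw [Finset.sum_congr rfl h, Finset.sum_add_distrib, Finset.sum_ite_eq' univ e]
  simp

lemma deltaF_update [DecidableEq A] (t hd : A → V) (x : A → ℝ) (e : A) (α : ℝ) (X : Finset V) :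
    deltaF t hd (Function.update x e α) X =
      deltaF t hd x X + (if t e ∈ X ∧ hd e ∉ X then α - x e else 0) := by
  rw [deltaF_eq_sum, deltaF_eq_sum]
  have h : ∀ f ∈ (univ : Finset A),
      (if t f ∈ X ∧ hd f ∉ X then Function.update x e α f else 0) =
      (if t f ∈ X ∧ hd f ∉ X then x f else 0) +
        (if f = e then (if t e ∈ X ∧ hd e ∉ X then α - x e else 0) else 0) := by
    intro f _
    by_cases hf : f = e
    · subst hf; simp [Function.update_self]
      split <;> ring
    · simp [Function.update_of_ne hf, hf]
  rw [Finset.sum_congr rfl h, Finset.sum_add_distrib, Finset.sum_ite_eq' univ e]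
  simp

lemma perEdge (p₁ p₂ q₁ q₂ : Prop) [Decidable p₁] [Decidable p₂] [Decidable q₁] [Decidable q₂]
    {lf uf : ℝ} (h : lf ≤ uf) :
    (if ¬p₁ ∧ q₁ then lf else 0) + (if ¬p₂ ∧ q₂ then lf else 0)
      - (if ¬(p₁ ∨ p₂) ∧ (q₁ ∨ q₂) then lf else 0)
      - (if ¬(p₁ ∧ p₂) ∧ (q₁ ∧ q₂) then lf else 0)
      - (if p₁ ∧ ¬q₁ then uf else 0) - (if p₂ ∧ ¬q₂ then uf else 0)
      + (if (p₁ ∨ p₂) ∧ ¬(q₁ ∨ q₂) then uf else 0)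
      + (if (p₁ ∧ p₂) ∧ ¬(q₁ ∧ q₂) then uf else 0) ≤ 0 := by
  by_cases h₁ : p₁ <;> by_cases h₂ : p₂ <;> by_cases h₃ : q₁ <;> by_cases h₄ : q₂ <;>
    simp [h₁, h₂, h₃, h₄] <;> linarith

end helpers

section uncross
variable {V A : Type*} [Fintype A] [DecidableEq V]

lemma uncross (t hd : A → V) (b : Finset V → ℝ) (hb : Submodular b)
    (l u : A → ℝ) (hlu : ∀ e, l e ≤ u e)
    (hcond : ∀ X : Finset V, rhoF t hd l X - deltaF t hd u X ≤ b X)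
    (e : A) (X Y : Finset V)
    (heX : t e ∉ X ∧ hd e ∈ X) (heY : t e ∈ Y ∧ hd e ∉ Y) :
    rhoF t hd l Y - deltaF t hd u Y - b Y + u e ≤
      b X - rhoF t hd l X + deltaF t hd u X + l e := by
  classical
  have hsub := hb X Y
  have hU := hcond (X ∪ Y)
  have hI := hcond (X ∩ Y)
  suffices key : rhoF t hd l X + rhoF t hd l Y - deltaF t hd u X - deltaF t hd u Y
      + u e - l e ≤ rhoF t hd l (X ∪ Y) + rhoF t hd l (X ∩ Y)
      - deltaF t hd u (X ∪ Y) - deltaF t hd u (X ∩ Y) by linarith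
  set G : A → ℝ := fun f =>
    (if t f ∉ X ∧ hd f ∈ X then l f else 0) + (if t f ∉ Y ∧ hd f ∈ Y then l f else 0)
    - (if t f ∉ X ∪ Y ∧ hd f ∈ X ∪ Y then l f else 0)
    - (if t f ∉ X ∩ Y ∧ hd f ∈ X ∩ Y then l f else 0)
    - (if t f ∈ X ∧ hd f ∉ X then u f else 0) - (if t f ∈ Y ∧ hd f ∉ Y then u f else 0)
    + (if t f ∈ X ∪ Y ∧ hd f ∉ X ∪ Y then u f else 0)
    + (if t f ∈ X ∩ Y ∧ hd f ∉ X ∩ Y then u f else 0)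
    + (if f = e then u e - l e else 0) with hG
  have hsum : ∑ f, G f ≤ 0 := by
    apply Finset.sum_nonpos
    intro f _
    rw [hG]
    by_cases hf : f = e
    · subst hf
      obtain ⟨hx1, hx2⟩ := heX
      obtain ⟨hy1, hy2⟩ := heY
      simp only [Finset.mem_union, Finset.mem_inter, if_pos rfl]
      simp [hx1, hx2, hy1, hy2]
    · simp only [Finset.mem_union, Finset.mem_inter, if_neg hf, add_zero]
      exact perEdge (t f ∈ X) (t f ∈ Y) (hd f ∈ X) (hd f ∈ Y) (hlu f)
  have hexp : ∑ f, G f = rhoF t hd l X + rhoF t hd l Y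
      - rhoF t hd l (X ∪ Y) - rhoF t hd l (X ∩ Y)
      - deltaF t hd u X - deltaF t hd u Y
      + deltaF t hd u (X ∪ Y) + deltaF t hd u (X ∩ Y) + (u e - l e) := by
    rw [hG]
    simp only [rhoF_eq_sum, deltaF_eq_sum]
    rw [Finset.sum_add_distrib, Finset.sum_add_distrib, Finset.sum_add_distrib,
      Finset.sum_sub_distrib, Finset.sum_sub_distrib, Finset.sum_sub_distrib,
      Finset.sum_sub_distrib, Finset.sum_add_distrib, Finset.sum_ite_eq' univ e]
    simp
  rw [hexp] at hsum
  linarith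

end uncross

section feas
variable {V A : Type*} [Fintype V] [Fintype A] [DecidableEq V]

lemma feas_aux (t hd : A → V) (b : Finset V → ℝ) (hb : Submodular b) :
    ∀ n : ℕ, ∀ l u : A → ℝ, (univ.filter fun e => l e ≠ u e).card = n →
    (∀ e, l e ≤ u e) → (∀ X : Finset V, rhoF t hd l X - deltaF t hd u X ≤ b X) →
    ∃ x : A → ℝ, (∀ e, l e ≤ x e ∧ x e ≤ u e) ∧ IsSubmodularFlow t hd b x := by
  classical
  intro n
  induction n with
  | zero =>
    intro l u hcard hlu hcond
    have hlueq : ∀ e, l e = u e := by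
      intro e
      by_contra hne
      have : e ∈ univ.filter fun e => l e ≠ u e := Finset.mem_filter.mpr ⟨mem_univ e, hne⟩
      have := Finset.card_pos.mpr ⟨e, this⟩
      omega
    refine ⟨l, fun e => ⟨le_refl _, (hlueq e).le⟩, fun X => ?_⟩
    have hdel : deltaF t hd l X = deltaF t hd u X :=
      Finset.sum_congr rfl fun f _ => hlueq f
    rw [hdel]; exact hcond X
  | succ n ih =>
    intro l u hcard hlu hcond
    have hne : (univ.filter fun e => l e ≠ u e).Nonempty := by
      rw [← Finset.card_pos, hcard]; omega
    obtain ⟨e, hemem⟩ := hne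
    have helu : l e ≠ u e := (Finset.mem_filter.mp hemem).2
    set O : Finset (Finset V) := univ.filter (fun X => t e ∈ X ∧ hd e ∉ X) with hO
    set α : ℝ := if hO' : O.Nonempty then
        max (l e) (O.sup' hO' fun X => rhoF t hd l X - deltaF t hd u X - b X + u e)
      else l e with hα
    have hαl : l e ≤ α := by
      rw [hα]; split
      · exact le_max_left _ _
      · exact le_refl _
    have hterm : ∀ X ∈ O, rhoF t hd l X - deltaF t hd u X - b X + u e ≤ u e := by
      intro X _; linarith [hcond X]
    have hαu : α ≤ u e := by
      rw [hα]; split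
      · exact max_le (hlu e) (Finset.sup'_le _ _ hterm)
      · exact hlu e
    have hL : ∀ X ∈ O, rhoF t hd l X - deltaF t hd u X - b X + u e ≤ α := by
      intro X hX
      rw [hα, dif_pos ⟨X, hX⟩]
      exact le_trans (Finset.le_sup' (fun X => rhoF t hd l X - deltaF t hd u X - b X + u e) hX) (le_max_right _ _)
    have hUb : ∀ X : Finset V, (t e ∉ X ∧ hd e ∈ X) →
        α ≤ b X - rhoF t hd l X + deltaF t hd u X + l e := by
      intro X hX
      have hbase : l e ≤ b X - rhoF t hd l X + deltaF t hd u X + l e := by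
        linarith [hcond X]
      rw [hα]; split
      · refine max_le hbase (Finset.sup'_le _ _ ?_)
        intro Y hY
        exact uncross t hd b hb l u hlu hcond e X Y hX (Finset.mem_filter.mp hY).2
      · exact hbase
    set l' := Function.update l e α with hl'
    set u' := Function.update u e α with hu'
    have hlu' : ∀ f, l' f ≤ u' f := by
      intro f
      by_cases hf : f = e
      · subst hf; simp [hl', hu']
      · simp [hl', hu', Function.update_of_ne hf]; exact hlu f
    have hcard' : (univ.filter fun f => l' f ≠ u' f).card = n := by
      have hset : (univ.filter fun f => l' f ≠ u' f) =
          (univ.filter fun f => l f ≠ u f).erase e := by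
        ext f
        simp only [Finset.mem_erase, Finset.mem_filter, mem_univ, true_and]
        by_cases hf : f = e
        · subst hf; simp [hl', hu']
        · simp [hl', hu', Function.update_of_ne hf, hf]
      rw [hset, Finset.card_erase_of_mem hemem, hcard]
      omega
    have hcond' : ∀ X : Finset V, rhoF t hd l' X - deltaF t hd u' X ≤ b X := by
      intro X
      rw [hl', hu', rhoF_update, deltaF_update]
      by_cases hin : t e ∉ X ∧ hd e ∈ X
      · have hout : ¬(t e ∈ X ∧ hd e ∉ X) := fun h => hin.1 h.1
        rw [if_pos hin, if_neg hout]
        have := hUb X hin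
        linarith [hcond X]
      · by_cases hout : t e ∈ X ∧ hd e ∉ X
        · rw [if_neg hin, if_pos hout]
          have := hL X (Finset.mem_filter.mpr ⟨mem_univ X, hout⟩)
          linarith
        · rw [if_neg hin, if_neg hout]
          simpa using hcond X
    obtain ⟨x, hx1, hx2⟩ := ih l' u' hcard' hlu' hcond'
    refine ⟨x, fun f => ?_, hx2⟩
    by_cases hf : f = e
    · subst hf
      have h1 := (hx1 f).1
      have h2 := (hx1 f).2
      simp only [hl', hu', Function.update_self] at h1 h2
      exact ⟨le_trans hαl h1, le_trans h2 hαu⟩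
    · have h1 := (hx1 f).1
      have h2 := (hx1 f).2
      simp only [hl', hu', Function.update_of_ne hf] at h1 h2
      exact ⟨h1, h2⟩

end feas

section main
variable {V A : Type*} [Fintype V] [Fintype A] [DecidableEq V]

lemma rhoF_shift (t hd : A → V) (c x : A → ℝ) (d : ℝ) (X : Finset V) :
    rhoF t hd (fun e => x e + d * (c e)⁻¹) X = rhoF t hd x X + d * rhoW t hd c X := by
  rw [rhoF, rhoF, rhoW, Finset.mul_sum, ← Finset.sum_add_distrib]

lemma deltaF_shift (t hd : A → V) (c x : A → ℝ) (d : ℝ) (X : Finset V) :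
    deltaF t hd (fun e => x e + d * (c e)⁻¹) X = deltaF t hd x X + d * deltaW t hd c X := by
  rw [deltaF, deltaF, deltaW, Finset.mul_sum, ← Finset.sum_add_distrib]

end main

theorem stmt_9 {V A : Type*} [Fintype V] [Fintype A] [DecidableEq V] [Nonempty A]
    (t hd : A → V) (c : A → ℝ) (hc : ∀ e : A, 0 < c e)
    (b : Finset V → ℝ) (hb : Submodular b)
    (hfeas : ∃ x : A → ℝ, IsSubmodularFlow t hd b x)
    (hzero : ∀ X : Finset V, partW t hd c X = 0) :
    (∀ κ₁ κ₂ : ℝ, sW t hd c b κ₁ = sW t hd c b κ₂) ∧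
    sigmaStarW t hd c b =
      max 0 (sSup {r : ℝ | ∃ X : Finset V, 0 < deltaW t hd c X ∧
        r = -(b X) / deltaW t hd c X}) := by
  classical
  have hRD : ∀ X : Finset V, rhoW t hd c X = deltaW t hd c X := by
    intro X; have := hzero X; rw [partW] at this; linarith
  constructor
  · -- sW is constant
    have hshift : ∀ κ₁ κ₂ : ℝ,
        {σ : ℝ | 0 ≤ σ ∧ ∃ x : A → ℝ, IsSubmodularFlow t hd b x ∧
          ∀ e : A, κ₁ * (c e)⁻¹ ≤ x e ∧ x e ≤ (κ₁ + σ) * (c e)⁻¹} ⊆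
        {σ : ℝ | 0 ≤ σ ∧ ∃ x : A → ℝ, IsSubmodularFlow t hd b x ∧
          ∀ e : A, κ₂ * (c e)⁻¹ ≤ x e ∧ x e ≤ (κ₂ + σ) * (c e)⁻¹} := by
      rintro κ₁ κ₂ σ ⟨hσ, x, hxf, hxb⟩
      refine ⟨hσ, fun e => x e + (κ₂ - κ₁) * (c e)⁻¹, fun X => ?_, fun e => ?_⟩
      · rw [rhoF_shift t hd c x _ X, deltaF_shift t hd c x _ X, hRD X]
        linarith [hxf X]
      · obtain ⟨h1, h2⟩ := hxb e
        constructor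
        · have h3 : κ₂ * (c e)⁻¹ = κ₁ * (c e)⁻¹ + (κ₂ - κ₁) * (c e)⁻¹ := by ring
          linarith
        · have h3 : (κ₂ + σ) * (c e)⁻¹ = (κ₁ + σ) * (c e)⁻¹ + (κ₂ - κ₁) * (c e)⁻¹ := by
            ring
          linarith
    intro κ₁ κ₂
    unfold sW
    rw [Set.Subset.antisymm (hshift κ₁ κ₂) (hshift κ₂ κ₁)]
  · -- sigmaStarW
    set D : Set ℝ := {r : ℝ | ∃ X : Finset V, 0 < deltaW t hd c X ∧
        r = -(b X) / deltaW t hd c X} with hD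
    set M : ℝ := max 0 (sSup D) with hM
    have hM0 : (0:ℝ) ≤ M := le_max_left _ _
    have hDfin : D.Finite := by
      have hsub : D ⊆ (fun X : Finset V => -(b X) / deltaW t hd c X) '' Set.univ := by
        rintro r ⟨X, hX, rfl⟩; exact ⟨X, trivial, rfl⟩
      exact (Set.finite_univ.image _).subset hsub
    have hDle : ∀ X : Finset V, 0 < deltaW t hd c X → -(b X) / deltaW t hd c X ≤ M := by
      intro X hX
      exact le_trans (le_csSup hDfin.bddAbove ⟨X, hX, rfl⟩) (le_max_right _ _)
    have hdnn : ∀ X : Finset V, 0 ≤ deltaW t hd c X := fun X =>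
      Finset.sum_nonneg fun e _ => inv_nonneg.mpr (hc e).le
    have hbnn : ∀ X : Finset V, deltaW t hd c X = 0 → 0 ≤ b X := by
      intro X hX
      have hout : outEdges t hd X = ∅ := by
        by_contra h
        obtain ⟨e, he⟩ := Finset.nonempty_iff_ne_empty.mpr h
        have : 0 < deltaW t hd c X :=
          Finset.sum_pos' (fun f _ => inv_nonneg.mpr (hc f).le)
            ⟨e, he, inv_pos.mpr (hc e)⟩
        linarith
      have hin : inEdges t hd X = ∅ := by
        by_contra h
        obtain ⟨e, he⟩ := Finset.nonempty_iff_ne_empty.mpr h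
        have : 0 < rhoW t hd c X :=
          Finset.sum_pos' (fun f _ => inv_nonneg.mpr (hc f).le)
            ⟨e, he, inv_pos.mpr (hc e)⟩
        rw [hRD X, hX] at this
        linarith
      obtain ⟨x₀, hx₀⟩ := hfeas
      have h := hx₀ X
      rw [rhoF, deltaF, hin, hout] at h
      simpa using h
    have hcond : ∀ X : Finset V,
        rhoF t hd (fun _ => (0:ℝ)) X - deltaF t hd (fun e => M * (c e)⁻¹) X ≤ b X := by
      intro X
      have hr0 : rhoF t hd (fun _ => (0:ℝ)) X = 0 := Finset.sum_const_zero
      have hdM : deltaF t hd (fun e => M * (c e)⁻¹) X = M * deltaW t hd c X := by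
        rw [deltaF, deltaW, Finset.mul_sum]
      rw [hr0, hdM]
      rcases (hdnn X).lt_or_eq with hpos | heq0
      · have h1 := hDle X hpos
        rw [div_le_iff₀ hpos] at h1
        linarith
      · have hb0 := hbnn X heq0.symm
        rw [← heq0]
        simpa using hb0
    obtain ⟨x, hx, hxflow⟩ := feas_aux t hd b hb _ (fun _ => (0:ℝ))
      (fun e => M * (c e)⁻¹) rfl (fun e => mul_nonneg hM0 (inv_nonneg.mpr (hc e).le)) hcond
    have hxup : ∀ e, c e * x e ≤ M := by
      intro e
      have h2 := (hx e).2
      calc c e * x e ≤ c e * (M * (c e)⁻¹) := by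
            exact mul_le_mul_of_nonneg_left h2 (hc e).le
        _ = M := by rw [mul_comm M, ← mul_assoc, mul_inv_cancel₀ (hc e).ne', one_mul]
    have hxlo : ∀ e, 0 ≤ c e * x e := fun e => mul_nonneg (hc e).le (hx e).1
    have hsx : spreadW c x ≤ M := by
      rw [spreadW]
      have h1 : univ.sup' univ_nonempty (fun e => c e * x e) ≤ M :=
        Finset.sup'_le _ _ fun e _ => hxup e
      have h2 : (0:ℝ) ≤ univ.inf' univ_nonempty (fun e => c e * x e) :=
        Finset.le_inf' _ _ fun e _ => hxlo e
      linarith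
    have hlow : ∀ s ∈ {s : ℝ | ∃ y : A → ℝ, IsSubmodularFlow t hd b y ∧ spreadW c y = s},
        M ≤ s := by
      rintro s ⟨y, hyf, rfl⟩
      have hspnn : 0 ≤ spreadW c y := by
        rw [spreadW]
        have a := Classical.arbitrary A
        have h1 := Finset.inf'_le (fun e => c e * y e) (mem_univ a)
        have h2 := Finset.le_sup' (fun e => c e * y e) (mem_univ a)
        linarith
      apply max_le hspnn
      rcases Set.eq_empty_or_nonempty D with hDe | hDne
      · rw [hDe, Real.sSup_empty]; exact hspnn
      · apply csSup_le hDne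
        rintro r ⟨X, hX, rfl⟩
        rw [div_le_iff₀ hX]
        set m := univ.inf' univ_nonempty (fun e => c e * y e) with hm
        set Mx := univ.sup' univ_nonempty (fun e => c e * y e) with hMx
        have hrq : m * deltaW t hd c X ≤ rhoF t hd y X := by
          rw [← hRD X, rhoW, rhoF, Finset.mul_sum]
          apply Finset.sum_le_sum
          intro e _
          have h1 : m ≤ c e * y e := Finset.inf'_le _ (mem_univ e)
          calc m * (c e)⁻¹ ≤ (c e * y e) * (c e)⁻¹ :=
                mul_le_mul_of_nonneg_right h1 (inv_nonneg.mpr (hc e).le)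
            _ = y e := by rw [mul_comm (c e) (y e), mul_assoc, mul_inv_cancel₀ (hc e).ne', mul_one]
        have hqd : deltaF t hd y X ≤ Mx * deltaW t hd c X := by
          rw [deltaF, deltaW, Finset.mul_sum]
          apply Finset.sum_le_sum
          intro e _
          have h1 : c e * y e ≤ Mx := by
            rw [hMx]; exact Finset.le_sup' (fun e => c e * y e) (mem_univ e)
          calc y e = (c e * y e) * (c e)⁻¹ := by
                rw [mul_comm (c e) (y e), mul_assoc, mul_inv_cancel₀ (hc e).ne', mul_one]
            _ ≤ Mx * (c e)⁻¹ :=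
                mul_le_mul_of_nonneg_right h1 (inv_nonneg.mpr (hc e).le)
        have hfl := hyf X
        have hexp : spreadW c y * deltaW t hd c X =
            Mx * deltaW t hd c X - m * deltaW t hd c X := by
          rw [spreadW, ← hm, ← hMx]; ring
        linarith
    have hmem : spreadW c x ∈
        {s : ℝ | ∃ y : A → ℝ, IsSubmodularFlow t hd b y ∧ spreadW c y = s} :=
      ⟨x, hxflow, rfl⟩
    have hbdd : BddBelow {s : ℝ | ∃ y : A → ℝ, IsSubmodularFlow t hd b y ∧ spreadW c y = s} :=
      ⟨M, hlow⟩
    rw [sigmaStarW]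
    exact le_antisymm (le_trans (csInf_le hbdd hmem) hsx) (le_csInf ⟨_, hmem⟩ hlow)
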